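/- In a normal S3⁼∀-model satisfying also the S5 condition, for every ultrafilter T (w.r.t. ≤_M) of the model, NEC_T = NEC, where NEC_T := { a ∈ M | f_□(a) ∈ T }. -/

import Mathlib

/-- The algebraic part of a normal S3⁼∀-model: universe M with sets
NEC ⊆ TRUE ⊆ M, NEC ≠ ∅, operations making M a Boolean prealgebra with
respect to the preorder a ≤_M b ⟺ f_→(a,b) ∈ NEC (the Boolean-algebra laws
of the quotient are stated up to this preorder), the truth conditions,
NEC a filter, and the S3 conditions for f_□. -/
structure NS3Model (M : Type*) where
  TRUE : Set M
  NEC : Set M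
  bot : M
  top : M
  neg : M → M
  sup : M → M → M
  inf : M → M → M
  imp : M → M → M
  box : M → M
  nec_sub_true : NEC ⊆ TRUE
  nec_nonempty : NEC.Nonempty
  -- (i) ≤_M (defined by f_→(a,b) ∈ NEC) is a preorder making M a Boolean prealgebra
  refl : ∀ a, imp a a ∈ NEC
  trans : ∀ a b c, imp a b ∈ NEC → imp b c ∈ NEC → imp a c ∈ NEC
  le_sup_left : ∀ a b, imp a (sup a b) ∈ NEC
  le_sup_right : ∀ a b, imp b (sup a b) ∈ NEC
  sup_le : ∀ a b c, imp a c ∈ NEC → imp b c ∈ NEC → imp (sup a b) c ∈ NEC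
  inf_le_left : ∀ a b, imp (inf a b) a ∈ NEC
  inf_le_right : ∀ a b, imp (inf a b) b ∈ NEC
  le_inf : ∀ a b c, imp c a ∈ NEC → imp c b ∈ NEC → imp c (inf a b) ∈ NEC
  bot_le : ∀ a, imp bot a ∈ NEC
  le_top : ∀ a, imp a top ∈ NEC
  distrib : ∀ a b c, imp (inf a (sup b c)) (sup (inf a b) (inf a c)) ∈ NEC
  compl_inf : ∀ a, imp (inf a (neg a)) bot ∈ NEC
  compl_sup : ∀ a, imp top (sup a (neg a)) ∈ NEC
  imp_def₁ : ∀ a b, imp (imp a b) (sup (neg a) b) ∈ NEC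
  imp_def₂ : ∀ a b, imp (sup (neg a) b) (imp a b) ∈ NEC
  -- (ii) truth conditions
  bot_not_true : bot ∉ TRUE
  top_true : top ∈ TRUE
  imp_tc : ∀ a b, imp a b ∈ TRUE ↔ (a ∉ TRUE ∨ b ∈ TRUE)
  neg_tc : ∀ a, neg a ∈ TRUE ↔ a ∉ TRUE
  inf_tc : ∀ a b, inf a b ∈ TRUE ↔ (a ∈ TRUE ∧ b ∈ TRUE)
  sup_tc : ∀ a b, sup a b ∈ TRUE ↔ (a ∈ TRUE ∨ b ∈ TRUE)
  box_tc : ∀ a, box a ∈ TRUE ↔ a ∈ NEC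
  -- (iii) NEC is a filter w.r.t. ≤_M
  nec_up : ∀ a b, a ∈ NEC → imp a b ∈ NEC → b ∈ NEC
  nec_inf : ∀ a b, a ∈ NEC → b ∈ NEC → inf a b ∈ NEC
  -- (iv) conditions for f_□
  box_le : ∀ a, imp (box a) a ∈ NEC
  box_K : ∀ a b, imp (box (imp a b)) (imp (box a) (box b)) ∈ NEC
  box_S3 : ∀ a b, imp (box (imp a b)) (box (imp (box a) (box b))) ∈ NEC

namespace NS3Model

variable {M : Type*}

/-- The preorder a ≤_M b :⟺ f_→(a,b) ∈ NEC. -/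
def le (S : NS3Model M) (a b : M) : Prop := S.imp a b ∈ S.NEC

/-- The induced equivalence a ≈_M b. -/
def equiv (S : NS3Model M) (a b : M) : Prop := S.le a b ∧ S.le b a

/-- A filter with respect to ≤_M. -/
def IsFilter (S : NS3Model M) (F : Set M) : Prop :=
  F.Nonempty ∧ (∀ a b, a ∈ F → S.le a b → b ∈ F) ∧
    (∀ a b, a ∈ F → b ∈ F → S.inf a b ∈ F) ∧ S.bot ∉ F

/-- An ultrafilter (maximal filter) with respect to ≤_M. -/
def IsUltrafilter (S : NS3Model M) (U : Set M) : Prop :=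
  S.IsFilter U ∧ ∀ G, S.IsFilter G → U ⊆ G → G = U

end NS3Model

/-! The S4 condition makes `□a` necessary as soon as `□a` is true, and the S5 condition makes
`¬□a` necessary as soon as `¬□a` is true. Hence `□a` is either necessary or refuted by a
necessary formula; since every filter contains `NEC` and no proper filter contains both `x`
and `¬x`, the formula `□a` lies in the ultrafilter `T` exactly when `□a` is true, i.e. when
`a ∈ NEC`.
-/

namespace NS3Model

variable {M : Type*} (S : NS3Model M)

theorem mem_true_of_le {a b : M} (hab : S.le a b) (ha : a ∈ S.TRUE) : b ∈ S.TRUE :=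
  ((S.imp_tc a b).1 (S.nec_sub_true hab)).resolve_left (not_not_intro ha)

theorem le_of_mem_nec (a : M) {n : M} (hn : n ∈ S.NEC) : S.le a n :=
  S.nec_up _ _ (S.nec_up _ _ hn (S.le_sup_right (S.neg a) n)) (S.imp_def₂ a n)

theorem nec_subset_of_isFilter {F : Set M} (hF : S.IsFilter F) : S.NEC ⊆ F := by
  obtain ⟨⟨x, hx⟩, hup, -, -⟩ := hF
  exact fun n hn => hup x n hx (S.le_of_mem_nec x hn)

theorem neg_not_mem_of_isFilter {F : Set M} (hF : S.IsFilter F) {x : M} (hx : x ∈ F) :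
    S.neg x ∉ F := fun hnx =>
  hF.2.2.2 (hF.2.1 _ _ (hF.2.2.1 x _ hx hnx) (S.compl_inf x))

theorem box_mem_nec_of_mem_nec {a : M} (h4 : S.le (S.box a) (S.box (S.box a)))
    (ha : a ∈ S.NEC) : S.box a ∈ S.NEC :=
  (S.box_tc _).1 (S.mem_true_of_le h4 ((S.box_tc a).2 ha))

theorem neg_box_mem_nec_of_not_mem_nec {a : M}
    (h5 : S.le (S.neg (S.box a)) (S.box (S.neg (S.box a)))) (ha : a ∉ S.NEC) :
    S.neg (S.box a) ∈ S.NEC :=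
  (S.box_tc _).1 <| S.mem_true_of_le h5 <| (S.neg_tc _).2 fun hbox => ha ((S.box_tc a).1 hbox)

end NS3Model

/-- In a normal S5⁼∀-model (a normal S3⁼∀-model satisfying the
S4 and S5 conditions), for every ultrafilter T w.r.t. ≤_M,
NEC_T := { a | f_□(a) ∈ T } equals NEC. -/
theorem s5_necT_eq_nec {M : Type*} (S : NS3Model M)
    (h4 : ∀ a : M, S.le (S.box a) (S.box (S.box a)))
    (h5 : ∀ a : M, S.le (S.neg (S.box a)) (S.box (S.neg (S.box a))))
    (T : Set M) (hT : S.IsUltrafilter T) :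
    { a : M | S.box a ∈ T } = S.NEC := by
  have hNEC : S.NEC ⊆ T := S.nec_subset_of_isFilter hT.1
  refine Set.Subset.antisymm (fun a hbox => ?_)
    fun a ha => hNEC (S.box_mem_nec_of_mem_nec (h4 a) ha)
  by_contra ha
  exact S.neg_not_mem_of_isFilter hT.1 hbox (hNEC (S.neg_box_mem_nec_of_not_mem_nec (h5 a) ha))
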